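/- Energy decrease for AdaPBB: for every k ≥ 1, V_{k+1} ≤ U_k ≤ V_k. -/

import Mathlib

open scoped RealInnerProductSpace
open Finset Filter

noncomputable section

/-- The AdaPBB iteration (Algorithm 3 of the paper) in its implicit form, for a composite
objective `F = f + g` where `f : ℝⁿ → ℝ` is convex and differentiable with gradient `f'`,
and `g : ℝⁿ → ℝ` is convex.  `ξ k` is a subgradient of `g` at `x k`. -/
structure AdaPBB (n : ℕ) where
  f : EuclideanSpace ℝ (Fin n) → ℝ
  g : EuclideanSpace ℝ (Fin n) → ℝ
  f' : EuclideanSpace ℝ (Fin n) → EuclideanSpace ℝ (Fin n)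
  x : ℕ → EuclideanSpace ℝ (Fin n)
  ξ : ℕ → EuclideanSpace ℝ (Fin n)
  α : ℕ → ℝ
  θ : ℕ → ℝ
  lam : ℕ → ℝ
  hfconv : ConvexOn ℝ Set.univ f
  hgconv : ConvexOn ℝ Set.univ g
  hgrad : ∀ y, HasGradientAt f (f' y) y
  hmin : ∃ z, ∀ y, f z + g z ≤ f y + g y
  hα0 : 0 < α 0
  hθ0 : 0 ≤ θ 0
  hsub : ∀ k, ∀ y, g (x k) + ⟪ξ k, y - x k⟫ ≤ g y
  hstep : ∀ k, x (k + 1) = x k - α k • (f' (x k) + ξ (k + 1))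
  hne : ∀ k, f' (x (k + 1)) ≠ f' (x k)
  hlam : ∀ k, lam (k + 1) =
    ⟪f' (x (k + 1)) - f' (x k), x (k + 1) - x k⟫ / ‖f' (x (k + 1)) - f' (x k)‖ ^ 2
  hlampos : ∀ k, 0 < lam (k + 1)
  hcase1 : ∀ k, α k ≤ lam (k + 1) →
    α (k + 1) = Real.sqrt (1 + θ k) * α k ∧ θ (k + 1) = α (k + 1) / α k
  hcase2 : ∀ k, α k / 2 < lam (k + 1) → lam (k + 1) < α k →
    α (k + 1) = α k / Real.sqrt 2 ∧ θ (k + 1) = 0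
  hcase3 : ∀ k, lam (k + 1) ≤ α k / 2 →
    α (k + 1) = lam (k + 1) / Real.sqrt 2 ∧ θ (k + 1) = 0

namespace AdaPBB

variable {n : ℕ}

/-- The composite objective `F = f + g`. -/
def F (S : AdaPBB n) (y : EuclideanSpace ℝ (Fin n)) : ℝ := S.f y + S.g y

/-- `B_k` (for `k ≥ 1`), as in (5.13). -/
def B (S : AdaPBB n) (k : ℕ) : ℝ :=
  if S.α (k - 1) ≤ S.lam k then 0
  else if S.α (k - 1) / 2 < S.lam k then 1
  else (S.α (k - 1) - S.lam k) ^ 2 / S.lam k ^ 2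

/-- `E_k` for `k ≥ 1`, as in (5.13). -/
def Eaux (S : AdaPBB n) (k : ℕ) : ℝ :=
  if S.α (k - 1) ≤ S.lam k then 1 / S.α (k - 1) else 0

/-- `E_k`, with the convention `E_0 = (E_1·α_1² - α_0)/α_0²`. -/
def E (S : AdaPBB n) (k : ℕ) : ℝ :=
  if k = 0 then (S.Eaux 1 * S.α 1 ^ 2 - S.α 0) / S.α 0 ^ 2 else S.Eaux k

/-- The energy `V_k` (for `k ≥ 1`), relative to a minimizer `xs` of `F`. -/
def V (S : AdaPBB n) (xs : EuclideanSpace ℝ (Fin n)) (k : ℕ) : ℝ :=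
  ‖S.x k - xs‖ ^ 2 + 2 * S.B k * S.α k ^ 2 * ‖S.f' (S.x (k - 1)) + S.ξ (k - 1)‖ ^ 2 +
    2 * S.α (k - 1) * (1 + S.E (k - 1) * S.α (k - 1)) * (S.F (S.x (k - 1)) - S.F xs)

/-- The energy `U_k` (for `k ≥ 1`), relative to a minimizer `xs` of `F`. -/
def U (S : AdaPBB n) (xs : EuclideanSpace ℝ (Fin n)) (k : ℕ) : ℝ :=
  ‖S.x k - xs‖ ^ 2 + 2 * S.B k * S.α k ^ 2 * ‖S.f' (S.x (k - 1)) + S.ξ (k - 1)‖ ^ 2 +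
    2 * S.E k * S.α k ^ 2 * (S.F (S.x (k - 1)) - S.F xs)

end AdaPBB

end

/-!
Write `dₖ = ∇f(xᵏ) + ξᵏ` and `pₖ = ∇f(xᵏ) + ξᵏ⁺¹`, so that `xᵏ⁺¹ = xᵏ - αₖ pₖ`.

The first inequality combines the three-point estimate
`‖xᵏ⁺¹ - x*‖² ≤ ‖xᵏ - x*‖² - 2αₖ (F(xᵏ) - F_*) + αₖ² ‖dₖ‖²` of the implicit proximal gradient
step with `2 Bₖ₊₁ αₖ₊₁² ≤ αₖ²` and with the gradient bound
`‖dₖ₊₁‖² ≤ Bₖ₊₁ ‖dₖ‖² + Eₖ₊₁ (F(xᵏ) - F(xᵏ⁺¹))`.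
For the latter put `G = ∇f(xᵏ⁺¹) - ∇f(xᵏ)`: then `dₖ₊₁ = G + pₖ`, and the definition of `λₖ₊₁`
says `αₖ ⟪G, pₖ⟫ = -λₖ₊₁ ‖G‖²`, whence `αₖ ‖dₖ₊₁‖² = (αₖ - 2λₖ₊₁) ‖G‖² + αₖ ‖pₖ‖²`.
Monotonicity of `∂g` gives `‖pₖ‖ ≤ ‖dₖ‖`, and each case of the step size rule is settled by
the descent inequality (Case i), by dropping the `‖G‖²` term (Case ii), or by
Cauchy–Schwarz `λₖ₊₁ ‖G‖ ≤ αₖ ‖pₖ‖` (Case iii).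

The second inequality reduces to `Eₖ αₖ² ≤ αₖ₋₁ (1 + Eₖ₋₁ αₖ₋₁)`; since `θₖ = Eₖ αₖ` in every
case, this is `Eₖ αₖ² ≤ αₖ₋₁ (1 + θₖ₋₁)`, an equality in Case i.
-/

section
variable {E : Type*} [NormedAddCommGroup E] [NormedSpace ℝ E]

theorem ConvexOn.add_fderiv_sub_le {s : Set E} {f : E → ℝ} {f' : E →L[ℝ] ℝ} {x y : E}
    (hf : ConvexOn ℝ s f) (hx : x ∈ s) (hy : y ∈ s) (hf' : HasFDerivAt f f' x) :
    f x + f' (y - x) ≤ f y := by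
  let L : ℝ →ᵃ[ℝ] E := AffineMap.lineMap x y
  have hfL : HasDerivAt (f ∘ L) (f' (y - x)) 0 :=
    HasFDerivAt.comp_hasDerivAt (0 : ℝ) (by simpa [L] using hf') AffineMap.hasDerivAt_lineMap
  have := (hf.comp_affineMap L).le_slope_of_hasDerivAt (x := 0) (y := 1) (by simpa [L] using hx)
    (by simpa [L] using hy) one_pos hfL
  simp only [slope_def_field, Function.comp_apply, L, AffineMap.lineMap_apply_zero,
    AffineMap.lineMap_apply_one, sub_zero, div_one] at this
  linarith

end

section
variable {E : Type*} [NormedAddCommGroup E] [InnerProductSpace ℝ E]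

theorem ConvexOn.add_inner_gradient_le [CompleteSpace E] {s : Set E} {f : E → ℝ} {v x y : E}
    (hf : ConvexOn ℝ s f) (hx : x ∈ s) (hy : y ∈ s) (hv : HasGradientAt f v x) :
    f x + ⟪v, y - x⟫ ≤ f y := by
  simpa using hf.add_fderiv_sub_le hx hy hv.hasFDerivAt

theorem inner_sub_sub_nonneg_of_subgradient {g : E → ℝ} {x y ξ η : E}
    (hξ : g x + ⟪ξ, y - x⟫ ≤ g y) (hη : g y + ⟪η, x - y⟫ ≤ g x) : 0 ≤ ⟪η - ξ, y - x⟫ := by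
  rw [← neg_sub y x, inner_neg_right] at hη
  rw [inner_sub_left]
  linarith

theorem norm_sq_le_norm_sub_sq_of_inner_nonpos {p e : E} (h : ⟪p, e⟫ ≤ 0) :
    ‖p‖ ^ 2 ≤ ‖p - e‖ ^ 2 := by
  rw [norm_sub_sq_real]
  nlinarith [sq_nonneg ‖e‖]

theorem norm_sub_sq_le_of_implicit_step {f g : E → ℝ} {x x' z u ξ ξ' : E} {α : ℝ} (hα : 0 ≤ α)
    (hx' : x' = x - α • (u + ξ')) (hf : f x + ⟪u, z - x⟫ ≤ f z)
    (hg : g x + ⟪ξ, x' - x⟫ ≤ g x') (hg' : g x' + ⟪ξ', z - x'⟫ ≤ g z) :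
    ‖x' - z‖ ^ 2 ≤ ‖x - z‖ ^ 2 - 2 * α * (f x + g x - (f z + g z)) + α ^ 2 * ‖u + ξ‖ ^ 2 := by
  have hzx : z - x = -(x - z) := (neg_sub x z).symm
  have hx'x : x' - x = -(α • (u + ξ')) := by rw [hx']; abel
  have hzx' : z - x' = α • (u + ξ') - (x - z) := by rw [hx']; abel
  have hx'z : x' - z = (x - z) - α • (u + ξ') := by rw [hx']; abel
  have huξ : u + ξ = (u + ξ') - (ξ' - ξ) := by abel
  rw [hzx, inner_neg_right] at hf
  rw [hx'x, inner_neg_right, real_inner_smul_right] at hg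
  rw [hzx', inner_sub_right, real_inner_smul_right] at hg'
  have key : f x + g x - (f z + g z) + α * ⟪ξ' - ξ, u + ξ'⟫ ≤ ⟪u + ξ', x - z⟫ := by
    rw [inner_sub_left, inner_add_left (x := u)]
    linarith
  rw [hx'z, huξ, norm_sub_sq_real (x - z), norm_sub_sq_real (u + ξ'), real_inner_smul_right,
    norm_smul, Real.norm_eq_abs, mul_pow, sq_abs, real_inner_comm (u + ξ') (x - z),
    real_inner_comm (ξ' - ξ) (u + ξ')]
  nlinarith [mul_le_mul_of_nonneg_left key hα, sq_nonneg (α * ‖ξ' - ξ‖)]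

namespace BarzilaiBorwein

/- The hypothesis `β * ⟪G, p⟫ = -(l * ‖G‖ ^ 2)` says that `l = ⟪G, s⟫ / ‖G‖²` is the
Barzilai–Borwein step size of the gradient change `G` along the step `s = -β • p`. -/

variable {G p : E} {β l : ℝ}

theorem mul_norm_add_sq_eq (h : β * ⟪G, p⟫ = -(l * ‖G‖ ^ 2)) :
    β * ‖G + p‖ ^ 2 = (β - 2 * l) * ‖G‖ ^ 2 + β * ‖p‖ ^ 2 := by
  rw [norm_add_sq_real]
  linear_combination 2 * h

theorem mul_norm_add_sq_le_mul_inner (h : β * ⟪G, p⟫ = -(l * ‖G‖ ^ 2)) (hβl : β ≤ l) :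
    β * ‖G + p‖ ^ 2 ≤ β * ⟪G + p, p⟫ := by
  rw [mul_norm_add_sq_eq h, inner_add_left, real_inner_self_eq_norm_sq, mul_add, h]
  nlinarith [sq_nonneg ‖G‖]

theorem norm_add_sq_le_norm_sq (h : β * ⟪G, p⟫ = -(l * ‖G‖ ^ 2)) (hβ : 0 < β)
    (hβl : β ≤ 2 * l) : ‖G + p‖ ^ 2 ≤ ‖p‖ ^ 2 := by
  refine le_of_mul_le_mul_left ?_ hβ
  rw [mul_norm_add_sq_eq h]
  nlinarith [sq_nonneg ‖G‖]

theorem mul_norm_le_mul_norm (h : β * ⟪G, p⟫ = -(l * ‖G‖ ^ 2)) (hβ : 0 ≤ β) :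
    l * ‖G‖ ≤ β * ‖p‖ := by
  rcases (norm_nonneg G).eq_or_lt with hG | hG
  · rw [← hG, mul_zero]
    positivity
  refine le_of_mul_le_mul_right ?_ hG
  calc l * ‖G‖ * ‖G‖ = -(β * ⟪G, p⟫) := by rw [h]; ring
    _ ≤ β * (‖G‖ * ‖p‖) := by
      rw [← mul_neg]
      exact mul_le_mul_of_nonneg_left ((neg_le_abs _).trans (abs_real_inner_le_norm G p)) hβ
    _ = β * ‖p‖ * ‖G‖ := by ring

theorem sq_mul_norm_add_sq_le (h : β * ⟪G, p⟫ = -(l * ‖G‖ ^ 2)) (hl : 0 < l)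
    (hlβ : 2 * l ≤ β) : l ^ 2 * ‖G + p‖ ^ 2 ≤ (β - l) ^ 2 * ‖p‖ ^ 2 := by
  have hβ : 0 < β := by linarith
  have hcs : (l * ‖G‖) ^ 2 ≤ (β * ‖p‖) ^ 2 :=
    pow_le_pow_left₀ (by positivity) (mul_norm_le_mul_norm h hβ.le) 2
  refine le_of_mul_le_mul_left ?_ hβ
  calc β * (l ^ 2 * ‖G + p‖ ^ 2) = (β - 2 * l) * (l * ‖G‖) ^ 2 + l ^ 2 * (β * ‖p‖ ^ 2) := by
        rw [mul_left_comm, mul_norm_add_sq_eq h]; ring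
    _ ≤ (β - 2 * l) * (β * ‖p‖) ^ 2 + l ^ 2 * (β * ‖p‖ ^ 2) := by gcongr
    _ = β * ((β - l) ^ 2 * ‖p‖ ^ 2) := by ring

end BarzilaiBorwein

end

namespace AdaPBB

variable {n : ℕ} (S : AdaPBB n)

theorem α_pos_and_θ_nonneg (k : ℕ) : 0 < S.α k ∧ 0 ≤ S.θ k := by
  induction k with
  | zero => exact ⟨S.hα0, S.hθ0⟩
  | succ k ih =>
    obtain ⟨hα, hθ⟩ := ih
    rcases le_or_gt (S.α k) (S.lam (k + 1)) with h₁ | h₁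
    · obtain ⟨hα', hθ'⟩ := S.hcase1 k h₁
      have hpos : 0 < S.α (k + 1) := by
        rw [hα']
        exact mul_pos (Real.sqrt_pos.2 (by linarith)) hα
      exact ⟨hpos, by rw [hθ']; positivity⟩
    · rcases le_or_gt (S.lam (k + 1)) (S.α k / 2) with h₂ | h₂
      · obtain ⟨hα', hθ'⟩ := S.hcase3 k h₂
        exact ⟨by rw [hα']; exact div_pos (S.hlampos k) (by positivity), hθ'.ge⟩
      · obtain ⟨hα', hθ'⟩ := S.hcase2 k h₂ h₁
        exact ⟨by rw [hα']; positivity, hθ'.ge⟩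

theorem α_pos (k : ℕ) : 0 < S.α k := (S.α_pos_and_θ_nonneg k).1

theorem θ_nonneg (k : ℕ) : 0 ≤ S.θ k := (S.α_pos_and_θ_nonneg k).2

theorem E_succ (k : ℕ) : S.E (k + 1) = S.Eaux (k + 1) := if_neg k.succ_ne_zero

theorem θ_succ (k : ℕ) : S.θ (k + 1) = S.Eaux (k + 1) * S.α (k + 1) := by
  by_cases h₁ : S.α k ≤ S.lam (k + 1)
  · rw [(S.hcase1 k h₁).2, Eaux, Nat.add_sub_cancel, if_pos h₁, div_eq_inv_mul, one_div]
  · have hθ : S.θ (k + 1) = 0 := by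
      rcases le_or_gt (S.lam (k + 1)) (S.α k / 2) with h₂ | h₂
      · exact (S.hcase3 k h₂).2
      · exact (S.hcase2 k h₂ (not_le.1 h₁)).2
    rw [hθ, Eaux, Nat.add_sub_cancel, if_neg h₁, zero_mul]

theorem Eaux_succ_mul_sq_le_mul_one_add_θ (k : ℕ) :
    S.Eaux (k + 1) * S.α (k + 1) ^ 2 ≤ S.α k * (1 + S.θ k) := by
  have hα := S.α_pos k
  by_cases h₁ : S.α k ≤ S.lam (k + 1)
  · rw [Eaux, Nat.add_sub_cancel, if_pos h₁, (S.hcase1 k h₁).1, mul_pow,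
      Real.sq_sqrt (by linarith [S.θ_nonneg k])]
    apply le_of_eq
    field_simp
  · rw [Eaux, Nat.add_sub_cancel, if_neg h₁, zero_mul]
    exact mul_nonneg hα.le (by linarith [S.θ_nonneg k])

theorem Eaux_succ_mul_sq_le_mul_one_add_E (k : ℕ) :
    S.Eaux (k + 1) * S.α (k + 1) ^ 2 ≤ S.α k * (1 + S.E k * S.α k) := by
  cases k with
  | zero =>
    have hα := S.α_pos 0
    rw [E, if_pos rfl]
    apply le_of_eq
    field_simp
    ring
  | succ k =>
    rw [E_succ, ← θ_succ]
    exact S.Eaux_succ_mul_sq_le_mul_one_add_θ (k + 1)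

theorem two_mul_B_mul_sq_le (k : ℕ) : 2 * S.B (k + 1) * S.α (k + 1) ^ 2 ≤ S.α k ^ 2 := by
  have hα := S.α_pos k
  have hl := S.hlampos k
  have hsqrt : Real.sqrt 2 ^ 2 = 2 := Real.sq_sqrt zero_le_two
  simp only [B, Nat.add_sub_cancel]
  by_cases h₁ : S.α k ≤ S.lam (k + 1)
  · rw [if_pos h₁]
    simp only [mul_zero, zero_mul]
    positivity
  rw [if_neg h₁]
  by_cases h₂ : S.α k / 2 < S.lam (k + 1)
  · rw [if_pos h₂, (S.hcase2 k h₂ (not_le.1 h₁)).1, div_pow, hsqrt]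
    linarith
  · rw [if_neg h₂, (S.hcase3 k (not_lt.1 h₂)).1, div_pow, hsqrt]
    field_simp
    nlinarith

theorem F_add_inner_le (k : ℕ) (y : EuclideanSpace ℝ (Fin n)) :
    S.F (S.x k) + ⟪S.f' (S.x k) + S.ξ k, y - S.x k⟫ ≤ S.F y := by
  have hf := S.hfconv.add_inner_gradient_le (Set.mem_univ _) (Set.mem_univ y) (S.hgrad (S.x k))
  have hg := S.hsub k y
  rw [inner_add_left]
  unfold F
  linarith

theorem x_sub_x_succ (k : ℕ) : S.x k - S.x (k + 1) = S.α k • (S.f' (S.x k) + S.ξ (k + 1)) := by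
  rw [S.hstep k]
  abel

theorem norm_x_succ_sub_sq_le (xs : EuclideanSpace ℝ (Fin n)) (k : ℕ) :
    ‖S.x (k + 1) - xs‖ ^ 2 ≤ ‖S.x k - xs‖ ^ 2 - 2 * S.α k * (S.F (S.x k) - S.F xs) +
      S.α k ^ 2 * ‖S.f' (S.x k) + S.ξ k‖ ^ 2 :=
  norm_sub_sq_le_of_implicit_step (S.α_pos k).le (S.hstep k)
    (S.hfconv.add_inner_gradient_le (Set.mem_univ _) (Set.mem_univ xs) (S.hgrad (S.x k)))
    (S.hsub k _) (S.hsub (k + 1) xs)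

theorem α_mul_inner_eq_neg_lam_mul (k : ℕ) :
    S.α k * ⟪S.f' (S.x (k + 1)) - S.f' (S.x k), S.f' (S.x k) + S.ξ (k + 1)⟫ =
      -(S.lam (k + 1) * ‖S.f' (S.x (k + 1)) - S.f' (S.x k)‖ ^ 2) := by
  have hG : ‖S.f' (S.x (k + 1)) - S.f' (S.x k)‖ ^ 2 ≠ 0 := by
    simpa [sub_eq_zero] using S.hne k
  rw [S.hlam k, div_mul_cancel₀ _ hG, ← neg_sub (S.x k), x_sub_x_succ, inner_neg_right,
    real_inner_smul_right, neg_neg]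

theorem norm_step_sq_le (k : ℕ) :
    ‖S.f' (S.x k) + S.ξ (k + 1)‖ ^ 2 ≤ ‖S.f' (S.x k) + S.ξ k‖ ^ 2 := by
  have hmono :=
    inner_sub_sub_nonneg_of_subgradient (S.hsub k (S.x (k + 1))) (S.hsub (k + 1) (S.x k))
  rw [← neg_sub (S.x k), x_sub_x_succ, inner_neg_right, real_inner_smul_right,
    real_inner_comm] at hmono
  have hinner : ⟪S.f' (S.x k) + S.ξ (k + 1), S.ξ (k + 1) - S.ξ k⟫ ≤ 0 :=
    nonpos_of_mul_nonpos_right (by linarith) (S.α_pos k)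
  have := norm_sq_le_norm_sub_sq_of_inner_nonpos hinner
  rwa [add_sub_assoc, sub_sub_self] at this

theorem norm_grad_succ_sq_le (k : ℕ) :
    ‖S.f' (S.x (k + 1)) + S.ξ (k + 1)‖ ^ 2 ≤
      S.B (k + 1) * ‖S.f' (S.x k) + S.ξ k‖ ^ 2 +
        S.Eaux (k + 1) * (S.F (S.x k) - S.F (S.x (k + 1))) := by
  set G := S.f' (S.x (k + 1)) - S.f' (S.x k)
  set p := S.f' (S.x k) + S.ξ (k + 1)
  have hGp : S.f' (S.x (k + 1)) + S.ξ (k + 1) = G + p := by simp only [G, p]; abel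
  have hstep := S.α_mul_inner_eq_neg_lam_mul k
  have hα := S.α_pos k
  have hp := S.norm_step_sq_le k
  have hdescent : S.α k * ⟪G + p, p⟫ ≤ S.F (S.x k) - S.F (S.x (k + 1)) := by
    have := S.F_add_inner_le (k + 1) (S.x k)
    rw [x_sub_x_succ, real_inner_smul_right, hGp] at this
    linarith
  simp only [B, Eaux, Nat.add_sub_cancel, hGp]
  by_cases h₁ : S.α k ≤ S.lam (k + 1)
  · rw [if_pos h₁, if_pos h₁, zero_mul, zero_add, one_div, inv_mul_eq_div, le_div_iff₀ hα,
      mul_comm]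
    exact (BarzilaiBorwein.mul_norm_add_sq_le_mul_inner hstep h₁).trans hdescent
  rw [if_neg h₁, if_neg h₁, zero_mul, add_zero]
  by_cases h₂ : S.α k / 2 < S.lam (k + 1)
  · rw [if_pos h₂, one_mul]
    exact (BarzilaiBorwein.norm_add_sq_le_norm_sq hstep hα (by linarith)).trans hp
  · rw [if_neg h₂, div_mul_eq_mul_div, le_div_iff₀ (pow_pos (S.hlampos k) 2), mul_comm]
    calc S.lam (k + 1) ^ 2 * ‖G + p‖ ^ 2 ≤ (S.α k - S.lam (k + 1)) ^ 2 * ‖p‖ ^ 2 :=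
          BarzilaiBorwein.sq_mul_norm_add_sq_le hstep (S.hlampos k) (by linarith)
      _ ≤ (S.α k - S.lam (k + 1)) ^ 2 * ‖S.f' (S.x k) + S.ξ k‖ ^ 2 := by gcongr

end AdaPBB

/-- Lemma 5.9 (energy decrease for AdaPBB): for every `k ≥ 1`, `V_{k+1} ≤ U_k ≤ V_k`. -/
theorem adapbb_energy_decrease (n : ℕ) (S : AdaPBB n)
    (xs : EuclideanSpace ℝ (Fin n)) (hxs : ∀ y, S.F xs ≤ S.F y) :
    ∀ k : ℕ, 1 ≤ k → S.V xs (k + 1) ≤ S.U xs k ∧ S.U xs k ≤ S.V xs k := by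
  intro k hk
  obtain ⟨k, rfl⟩ := Nat.exists_eq_add_of_le' hk
  simp only [AdaPBB.V, AdaPBB.U, Nat.add_sub_cancel, AdaPBB.E_succ]
  constructor
  · have hdist := S.norm_x_succ_sub_sq_le xs (k + 1)
    have hgrad := mul_le_mul_of_nonneg_left (S.norm_grad_succ_sq_le k)
      (by positivity : 0 ≤ 2 * S.α (k + 1) ^ 2)
    have hB := mul_le_mul_of_nonneg_right (S.two_mul_B_mul_sq_le (k + 1))
      (sq_nonneg ‖S.f' (S.x (k + 1)) + S.ξ (k + 1)‖)
    linarith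
  · have hcoef := mul_le_mul_of_nonneg_right (S.Eaux_succ_mul_sq_le_mul_one_add_E k)
      (sub_nonneg.2 (hxs (S.x k)))
    linarith
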